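/- arXiv:2104.09118 — 2 statements merged into one kernel-verified Lean document; each statement's English description precedes it below -/
import Mathlib

section
/- For real α with 1/2 < α < 3/2, there exist constants c_1, c_2 > 0 such that for all even L ≥ 4, ∑_{x=1}^{L/2} (∑_{y=1}^{L/2} 1/(x+y)^{2α})^{1/2} ≥ c_1 L^{3/2−α} − c_2. -/
open Finset Real

/-! On the square `[1, n]²` every `x + y` is at most `2n`, so each of the `n²` terms
`1 / (x + y) ^ (2α)` is at least `(2n) ^ (-2α)`. The inner sums are therefore at least
`n (2n) ^ (-2α)`, and the outer sum of their square roots at least `n ^ (3/2) (2n) ^ (-α)`,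
which for `L = 2n` is `2 ^ (-3/2) L ^ (3/2 - α)`. -/

lemma rpow_neg_le_one_div_add_rpow {m x y : ℕ} {β : ℝ} (hβ : 0 ≤ β) (hx : 1 ≤ x)
    (hxy : x + y ≤ m) : (m : ℝ) ^ (-β) ≤ 1 / ((x : ℝ) + y) ^ β := by
  have hpos : (0 : ℝ) < x + y := by positivity
  rw [rpow_neg (by positivity), ← one_div]
  exact one_div_le_one_div_of_le (rpow_pos_of_pos hpos β)
    (rpow_le_rpow hpos.le (by exact_mod_cast hxy) hβ)

lemma mul_rpow_neg_le_sum_Icc_one_div_add_rpow {n x : ℕ} {β : ℝ} (hβ : 0 ≤ β) (hx : 1 ≤ x)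
    (hxn : x ≤ n) :
    (n : ℝ) * (2 * n : ℝ) ^ (-β) ≤ ∑ y ∈ Icc 1 n, 1 / ((x : ℝ) + y) ^ β := by
  have hterm : ∀ y ∈ Icc 1 n, (2 * n : ℝ) ^ (-β) ≤ 1 / ((x : ℝ) + y) ^ β := by
    intro y hy
    exact_mod_cast rpow_neg_le_one_div_add_rpow hβ hx (by simp at hy; omega : x + y ≤ 2 * n)
  simpa using card_nsmul_le_sum _ _ _ hterm

lemma rpow_three_halves_mul_le_sum_Icc_sqrt (n : ℕ) {β : ℝ} (hβ : 0 ≤ β) :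
    (n : ℝ) ^ (3 / 2 : ℝ) * (2 * n : ℝ) ^ (-β / 2) ≤
      ∑ x ∈ Icc 1 n, (∑ y ∈ Icc 1 n, 1 / ((x : ℝ) + y) ^ β) ^ ((1 : ℝ) / 2) := by
  have hn : (0 : ℝ) ≤ n := n.cast_nonneg
  have hrow : ∀ x ∈ Icc 1 n, (n : ℝ) ^ ((1 : ℝ) / 2) * (2 * n : ℝ) ^ (-β / 2) ≤
      (∑ y ∈ Icc 1 n, 1 / ((x : ℝ) + y) ^ β) ^ ((1 : ℝ) / 2) := by
    intro x hx
    rw [mem_Icc] at hx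
    calc (n : ℝ) ^ ((1 : ℝ) / 2) * (2 * n : ℝ) ^ (-β / 2)
        = ((n : ℝ) * (2 * n : ℝ) ^ (-β)) ^ ((1 : ℝ) / 2) := by
          rw [mul_rpow hn (by positivity), ← rpow_mul (by positivity)]
          ring_nf
      _ ≤ _ := rpow_le_rpow (by positivity)
          (mul_rpow_neg_le_sum_Icc_one_div_add_rpow hβ hx.1 hx.2) (by norm_num)
  calc (n : ℝ) ^ (3 / 2 : ℝ) * (2 * n : ℝ) ^ (-β / 2)
      = (n : ℝ) * ((n : ℝ) ^ ((1 : ℝ) / 2) * (2 * n : ℝ) ^ (-β / 2)) := by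
        rw [← mul_assoc, ← rpow_one_add' hn (by norm_num)]
        norm_num
    _ ≤ _ := by simpa using card_nsmul_le_sum _ _ _ hrow

theorem stmt_7_general (α : ℝ) (hα1 : 1/2 < α) :
    ∃ c₁ c₂ : ℝ, 0 < c₁ ∧ 0 < c₂ ∧
      ∀ L : ℕ, 4 ≤ L → Even L →
        c₁ * (L : ℝ) ^ (3/2 - α) - c₂ ≤
          ∑ x ∈ Finset.Icc 1 (L/2),
            (∑ y ∈ Finset.Icc 1 (L/2), 1 / ((x : ℝ) + y) ^ (2*α)) ^ ((1:ℝ)/2) := by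
  refine ⟨(2 : ℝ) ^ (-(3 / 2) : ℝ), 1, by positivity, one_pos, fun L hL4 hEven => ?_⟩
  have hL2 : (2 * (L / 2 : ℕ) : ℝ) = L := by exact_mod_cast Nat.mul_div_cancel' hEven.two_dvd
  have hbound := rpow_three_halves_mul_le_sum_Icc_sqrt (L / 2) (β := 2 * α) (by linarith)
  have hL : (0 : ℝ) < L := by exact_mod_cast (by omega : 0 < L)
  have hscale : (2 : ℝ) ^ (-(3 / 2) : ℝ) * (L : ℝ) ^ (3 / 2 - α) =
      ((L / 2 : ℕ) : ℝ) ^ (3 / 2 : ℝ) * (2 * (L / 2 : ℕ) : ℝ) ^ (-(2 * α) / 2) := by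
    rw [hL2, show ((L / 2 : ℕ) : ℝ) = L / 2 by linarith, div_rpow hL.le (by norm_num),
      rpow_neg (by norm_num), sub_eq_add_neg, rpow_add hL, neg_div,
      mul_div_cancel_left₀ α two_ne_zero]
    ring
  linarith

theorem stmt_7 (α : ℝ) (hα1 : 1/2 < α) (hα2 : α < 3/2) :
    ∃ c₁ c₂ : ℝ, 0 < c₁ ∧ 0 < c₂ ∧
      ∀ L : ℕ, 4 ≤ L → Even L →
        c₁ * (L : ℝ) ^ (3/2 - α) - c₂ ≤
          ∑ x ∈ Finset.Icc 1 (L/2),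
            (∑ y ∈ Finset.Icc 1 (L/2), 1 / ((x : ℝ) + y) ^ (2*α)) ^ ((1:ℝ)/2) :=
  stmt_7_general α hα1
end

section
/- For the one-dimensional long-range hopping model with single-particle Hamiltonian matrix h_{jk} = −1/|j−k|^α (for j ≠ k, distances taken on a ring of L sites with |j−k| ≤ L/2), and the boundary coupling matrix restricted to pairs crossing the cut between sites {1,…,L/2} and {L/2+1,…,L}: if α > 3/2, then the operator norm of the boundary coupling matrix (as a quadratic-form fermionic operator H_{AB}) is bounded above uniformly in L. -/
/-!
Write the coupling as `∑ⱼ (cⱼ⋆ bⱼ + bⱼ⋆ cⱼ)` with `bⱼ = ∑ₖ βⱼₖ cₖ`. The anticommutation relations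
give `bⱼ⋆ bⱼ + bⱼ bⱼ⋆ = ‖βⱼ‖₂²`, so the C⋆-identity yields `‖bⱼ‖ ≤ ‖βⱼ‖₂` and
`‖H_AB‖ ≤ 2 ∑ⱼ ‖βⱼ‖₂`. For a site at distance `m` from the cut every `r = r_{jk}` is at least `m`,
so splitting `r^{-2α} = r^{-(α+1/2)} r^{-(α-1/2)}` gives `‖βⱼ‖₂² ≤ 4 ζ(α - 1/2) m^{-(α+1/2)}`
(each distance occurs at most four times on the ring). Hence `‖βⱼ‖₂ = O(m^{-(2α+1)/4})`, which is
summable over the sites exactly when `α > 3/2`.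
-/

open ContinuousLinearMap

/-- Chord (ring) distance between sites `j` and `k` on a ring of `L` sites. -/
def ringDist (L j k : ℕ) : ℕ := min ((j : ℤ) - (k : ℤ)).natAbs (L - ((j : ℤ) - (k : ℤ)).natAbs)

open Finset Real

section CStarAlgebra

variable {A : Type*} [CStarAlgebra A]

def IsCAR {ι : Type*} [DecidableEq ι] (c : ι → A) : Prop :=
  ∀ i j, c i * star (c j) + star (c j) * c i = if i = j then 1 else 0

variable {ι : Type*} [Fintype ι] [DecidableEq ι] {c : ι → A}

lemma IsCAR.star_mul_self_add_mul_star_sum_smul (hc : IsCAR c) (β : ι → ℝ) :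
    star (∑ k, β k • c k) * (∑ k, β k • c k) + (∑ k, β k • c k) * star (∑ k, β k • c k)
      = (∑ k, β k ^ 2) • (1 : A) := by
  simp only [star_sum, star_smul, star_trivial, sum_mul, mul_sum, smul_mul_smul_comm]
  rw [sum_comm (f := fun i j => (β j * β i) • (c j * star (c i))), ← sum_add_distrib, sum_smul]
  refine sum_congr rfl fun i _ => ?_
  simp only [← sum_add_distrib, mul_comm (β _) (β i), ← smul_add]
  rw [sum_congr rfl fun j _ => by rw [add_comm, hc i j]]
  simp only [smul_ite, smul_zero, sum_ite_eq, mem_univ, if_true, sq]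

variable [PartialOrder A] [StarOrderedRing A]

lemma norm_sq_le_norm_star_mul_self_add_mul_star (a : A) :
    ‖a‖ ^ 2 ≤ ‖star a * a + a * star a‖ := by
  rw [sq, ← CStarRing.norm_star_mul_self]
  exact CStarAlgebra.norm_le_norm_of_nonneg_of_le (star_mul_self_nonneg a)
    (le_add_of_nonneg_right (mul_star_self_nonneg a))

lemma norm_sq_le_of_star_mul_self_add_mul_star_eq {a : A} {r : ℝ} (hr : 0 ≤ r)
    (h : star a * a + a * star a = r • (1 : A)) : ‖a‖ ^ 2 ≤ r := by
  have hone : ‖(1 : A)‖ ≤ 1 := by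
    rcases subsingleton_or_nontrivial A with _ | _
    · simp [Subsingleton.elim (1 : A) 0]
    · exact (CStarRing.norm_one (E := A)).le
  calc ‖a‖ ^ 2 ≤ ‖r • (1 : A)‖ := h ▸ norm_sq_le_norm_star_mul_self_add_mul_star a
    _ = r * ‖(1 : A)‖ := by rw [norm_smul, Real.norm_of_nonneg hr]
    _ ≤ r := mul_le_of_le_one_right hr hone

omit [Fintype ι] in
lemma IsCAR.norm_le_one (hc : IsCAR c) (i : ι) : ‖c i‖ ≤ 1 := by
  have h : star (c i) * c i + c i * star (c i) = (1 : ℝ) • (1 : A) := by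
    rw [add_comm, hc i i, if_pos rfl, one_smul]
  simpa using norm_sq_le_of_star_mul_self_add_mul_star_eq zero_le_one h

lemma IsCAR.norm_sum_smul_le (hc : IsCAR c) (β : ι → ℝ) :
    ‖∑ k, β k • c k‖ ≤ √(∑ k, β k ^ 2) :=
  Real.le_sqrt_of_sq_le <| norm_sq_le_of_star_mul_self_add_mul_star_eq
    (sum_nonneg fun k _ => sq_nonneg (β k)) (hc.star_mul_self_add_mul_star_sum_smul β)

lemma IsCAR.norm_sum_hopping_le (hc : IsCAR c) (β : ι → ι → ℝ) :
    ‖∑ j, ∑ k, β j k • (star (c j) * c k + star (c k) * c j)‖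
      ≤ 2 * ∑ j, √(∑ k, β j k ^ 2) := by
  set b : ι → A := fun j => ∑ k, β j k • c k
  have hrow : ∀ j, ∑ k, β j k • (star (c j) * c k + star (c k) * c j)
      = star (c j) * b j + star (b j) * c j := by
    intro j
    simp only [b, star_sum, star_smul, star_trivial, mul_sum, sum_mul, smul_add, sum_add_distrib,
      mul_smul_comm, smul_mul_assoc]
  have hterm : ∀ j, ‖star (c j) * b j + star (b j) * c j‖ ≤ 2 * √(∑ k, β j k ^ 2) := by
    intro j
    have hcj := hc.norm_le_one j
    have hbj := hc.norm_sum_smul_le (β j)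
    calc _ ≤ ‖c j‖ * ‖b j‖ + ‖b j‖ * ‖c j‖ := by
          refine (norm_add_le _ _).trans (add_le_add ?_ ?_) <;>
            exact (norm_mul_le _ _).trans_eq (by rw [norm_star])
      _ ≤ 1 * √(∑ k, β j k ^ 2) + √(∑ k, β j k ^ 2) * 1 := by gcongr
      _ = 2 * √(∑ k, β j k ^ 2) := by ring
  calc _ = ‖∑ j, (star (c j) * b j + star (b j) * c j)‖ := by simp only [hrow]
    _ ≤ ∑ j, 2 * √(∑ k, β j k ^ 2) := (norm_sum_le _ _).trans (sum_le_sum fun j _ => hterm j)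
    _ = 2 * ∑ j, √(∑ k, β j k ^ 2) := (mul_sum _ _ _).symm

end CStarAlgebra

lemma sum_comp_le_mul_tsum {ι κ : Type*} [DecidableEq κ] {s : Finset ι} {f : ι → κ}
    {g : κ → ℝ} {N : ℕ} (hf : ∀ d, #{x ∈ s | f x = d} ≤ N) (hg : ∀ d, 0 ≤ g d)
    (hgs : Summable g) : ∑ x ∈ s, g (f x) ≤ N * ∑' d, g d := by
  rw [sum_comp]
  calc ∑ d ∈ s.image f, #{x ∈ s | f x = d} • g d ≤ ∑ d ∈ s.image f, N * g d := by
        refine sum_le_sum fun d _ => ?_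
        rw [nsmul_eq_mul]
        gcongr
        · exact hg d
        · exact_mod_cast hf d
    _ = N * ∑ d ∈ s.image f, g d := (mul_sum _ _ _).symm
    _ ≤ N * ∑' d, g d := by
        gcongr
        exact hgs.sum_le_tsum _ fun d _ => hg d

lemma card_filter_ringDist_eq_le_four (L d : ℕ) (j : Fin L) :
    #{k : Fin L | ringDist L j k = d} ≤ 4 := by
  calc _ ≤ #({j + d, j - d, j + (L - d), j - (L - d)} : Finset ℕ) := by
        refine card_le_card_of_injOn Fin.val (fun k hk => ?_) Fin.val_injective.injOn
        have hd := (mem_filter.1 (mem_coe.1 hk)).2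
        have hj := j.isLt
        have hk' := k.isLt
        unfold ringDist at hd
        simp only [coe_insert, coe_singleton, Set.mem_insert_iff, Set.mem_singleton_iff]
        omega
    _ ≤ 4 := card_le_four

lemma card_filter_min_sub_add_one_eq_le_two (L n d : ℕ) :
    #{j : Fin L | (j : ℕ) < n ∧ min (n - j) (j + 1) = d} ≤ 2 := by
  calc _ ≤ #({n - d, d - 1} : Finset ℕ) := by
        refine card_le_card_of_injOn Fin.val (fun j hj => ?_) Fin.val_injective.injOn
        have hj := (mem_filter.1 (mem_coe.1 hj)).2
        simp only [coe_insert, coe_singleton, Set.mem_insert_iff, Set.mem_singleton_iff]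
        omega
    _ ≤ 2 := card_le_two

lemma min_sub_add_one_le_ringDist {L n j k : ℕ} (hjn : j ≤ n) (hnk : n ≤ k) (hkL : k < L) :
    min (n - j) (j + 1) ≤ ringDist L j k := by
  unfold ringDist
  omega

lemma rpow_neg_add_le_mul {m r a b : ℝ} (hm : 0 < m) (hmr : m ≤ r) (ha : 0 ≤ a) :
    r ^ (-(a + b)) ≤ m ^ (-a) * r ^ (-b) := by
  rw [neg_add, rpow_add (hm.trans_le hmr)]
  exact mul_le_mul_of_nonneg_right (rpow_le_rpow_of_nonpos hm hmr (neg_nonpos.2 ha))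
    (rpow_nonneg (hm.le.trans hmr) _)

/-- The coefficient matrix of `H_AB` for the cut `A = {j < n}`, `B = {k ≥ n}`. -/
noncomputable def cutHopping (α : ℝ) (L n : ℕ) (j k : Fin L) : ℝ :=
  if (j : ℕ) < n ∧ n ≤ (k : ℕ) then -(1 : ℝ) / ((ringDist L j k : ℕ) : ℝ) ^ α else 0

section CutHopping

variable {α : ℝ} {L n : ℕ}

lemma sum_cutHopping_sq_le (hα : 3 / 2 < α) {j : Fin L} (hj : (j : ℕ) < n) :
    ∑ k, cutHopping α L n j k ^ 2
      ≤ ((min (n - j) (j + 1) : ℕ) : ℝ) ^ (-(α + 1 / 2))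
        * (4 * ∑' d : ℕ, (d : ℝ) ^ (-(α - 1 / 2))) := by
  set m : ℕ := min (n - j) (j + 1)
  have hm : (0 : ℝ) < m := by norm_cast; omega
  have hsummable : Summable fun d : ℕ => (d : ℝ) ^ (-(α - 1 / 2)) :=
    Real.summable_nat_rpow.2 (by linarith)
  calc ∑ k, cutHopping α L n j k ^ 2
      ≤ ∑ k : Fin L, (m : ℝ) ^ (-(α + 1 / 2)) * (ringDist L j k : ℝ) ^ (-(α - 1 / 2)) := by
        refine sum_le_sum fun k _ => ?_
        unfold cutHopping
        split_ifs with hjk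
        · have hmr : (m : ℝ) ≤ ringDist L j k := by
            exact_mod_cast min_sub_add_one_le_ringDist hj.le hjk.2 k.isLt
          have hr : (0 : ℝ) ≤ ringDist L j k := Nat.cast_nonneg _
          calc (-(1 : ℝ) / ((ringDist L j k : ℕ) : ℝ) ^ α) ^ 2
              = ((ringDist L j k : ℕ) : ℝ) ^ (-((α + 1 / 2) + (α - 1 / 2))) := by
                rw [div_pow, neg_one_sq, ← rpow_natCast, ← rpow_mul hr, rpow_neg hr,
                  one_div]
                ring_nf
            _ ≤ _ := rpow_neg_add_le_mul hm hmr (by linarith)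
        · rw [zero_pow two_ne_zero]
          positivity
    _ = (m : ℝ) ^ (-(α + 1 / 2)) * ∑ k : Fin L, (ringDist L j k : ℝ) ^ (-(α - 1 / 2)) :=
        (mul_sum _ _ _).symm
    _ ≤ (m : ℝ) ^ (-(α + 1 / 2)) * (4 * ∑' d : ℕ, (d : ℝ) ^ (-(α - 1 / 2))) := by
        gcongr
        exact_mod_cast sum_comp_le_mul_tsum (card_filter_ringDist_eq_le_four L · j)
          (fun d => rpow_nonneg (Nat.cast_nonneg d) _) hsummable

lemma sqrt_sum_cutHopping_sq_le (hα : 3 / 2 < α) (j : Fin L) :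
    √(∑ k, cutHopping α L n j k ^ 2)
      ≤ if (j : ℕ) < n then
          √(4 * ∑' d : ℕ, (d : ℝ) ^ (-(α - 1 / 2)))
            * ((min (n - j) (j + 1) : ℕ) : ℝ) ^ (-((α + 1 / 2) / 2))
        else 0 := by
  split_ifs with hj
  · set m : ℕ := min (n - j) (j + 1)
    have hm : (0 : ℝ) ≤ m := Nat.cast_nonneg m
    have hK : 0 ≤ 4 * ∑' d : ℕ, (d : ℝ) ^ (-(α - 1 / 2)) :=
      mul_nonneg zero_le_four (tsum_nonneg fun d => rpow_nonneg (Nat.cast_nonneg d) _)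
    calc √(∑ k, cutHopping α L n j k ^ 2)
        ≤ √((m : ℝ) ^ (-(α + 1 / 2)) * (4 * ∑' d : ℕ, (d : ℝ) ^ (-(α - 1 / 2)))) :=
          sqrt_le_sqrt (sum_cutHopping_sq_le hα hj)
      _ = _ := by
          rw [sqrt_mul' _ hK, mul_comm, sqrt_eq_rpow ((m : ℝ) ^ _), ← rpow_mul hm]
          ring_nf
  · simp [cutHopping, hj]

lemma sum_sqrt_sum_cutHopping_sq_le (hα : 3 / 2 < α) :
    ∑ j, √(∑ k, cutHopping α L n j k ^ 2)
      ≤ √(4 * ∑' d : ℕ, (d : ℝ) ^ (-(α - 1 / 2)))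
        * (2 * ∑' d : ℕ, (d : ℝ) ^ (-((α + 1 / 2) / 2))) := by
  have hsummable : Summable fun d : ℕ => (d : ℝ) ^ (-((α + 1 / 2) / 2)) :=
    Real.summable_nat_rpow.2 (by linarith)
  calc ∑ j, √(∑ k, cutHopping α L n j k ^ 2)
      ≤ ∑ j : Fin L, if (j : ℕ) < n then
          √(4 * ∑' d : ℕ, (d : ℝ) ^ (-(α - 1 / 2)))
            * ((min (n - j) (j + 1) : ℕ) : ℝ) ^ (-((α + 1 / 2) / 2))
        else 0 := sum_le_sum fun j _ => sqrt_sum_cutHopping_sq_le hα j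
    _ = √(4 * ∑' d : ℕ, (d : ℝ) ^ (-(α - 1 / 2)))
          * ∑ j ∈ {j : Fin L | (j : ℕ) < n},
              ((min (n - j) (j + 1) : ℕ) : ℝ) ^ (-((α + 1 / 2) / 2)) := by
        rw [← sum_filter, mul_sum]
    _ ≤ _ := by
        gcongr
        refine sum_comp_le_mul_tsum (fun d => ?_) (fun d => rpow_nonneg (Nat.cast_nonneg d) _)
          hsummable
        rw [filter_filter]
        exact card_filter_min_sub_add_one_eq_le_two L n d

end CutHopping

theorem stmt_18 (α : ℝ) (hα : 3/2 < α) :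
    ∃ C : ℝ, ∀ (L : ℕ), Even L → 4 ≤ L →
      ∀ (H : Type) (_ : NormedAddCommGroup H) (_ : InnerProductSpace ℂ H)
        (_ : CompleteSpace H) (c : Fin L → H →L[ℂ] H),
        (∀ i j : Fin L, c i * adjoint (c j) + adjoint (c j) * c i
          = if i = j then (1 : H →L[ℂ] H) else 0) →
        (∀ i j : Fin L, c i * c j + c j * c i = 0) →
        ‖∑ j : Fin L, ∑ k : Fin L,
            if (j : ℕ) < L/2 ∧ L/2 ≤ (k : ℕ) then
              (-(1 : ℝ) / ((ringDist L j k : ℕ) : ℝ) ^ α) •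
                (adjoint (c j) * c k + adjoint (c k) * c j)
            else 0‖ ≤ C := by
  refine ⟨2 * (√(4 * ∑' d : ℕ, (d : ℝ) ^ (-(α - 1 / 2)))
    * (2 * ∑' d : ℕ, (d : ℝ) ^ (-((α + 1 / 2) / 2)))), ?_⟩
  intro L _ _ H _ _ _ c hc _
  have hcar : IsCAR c := fun i j => by simpa only [star_eq_adjoint] using hc i j
  simpa only [cutHopping, ite_smul, zero_smul, star_eq_adjoint] using
    (hcar.norm_sum_hopping_le (cutHopping α L (L / 2))).trans
      (mul_le_mul_of_nonneg_left (sum_sqrt_sum_cutHopping_sq_le hα) zero_le_two)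
end
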